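/- Let M ≥ 1, let A, S ∈ ℂ^{M×M} be Hermitian matrices, let h̃ ∈ ℂ^M, and let σ^2 ∈ ℝ and T > 0 be real constants. Then the following are equivalent: (1) for all e ∈ ℂ^M with ‖e‖^2 ≤ T, one has Re(e^H (S A S) e) + 2 Re(e^H S A h̃) + Re(h̃^H A h̃) − σ^2 ≥ 0; (2) there exists α ≥ 0 such that the (M+1)×(M+1) block matrix [[S A S + α I_M, S A h̃],[(S A h̃)^H, h̃^H A h̃ − σ^2 − α T]] is positive semidefinite. -/

import Mathlib

/-!
Homogenising with a last coordinate shows that the block matrix is positive semidefinite exactly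
when `f e + α (‖e‖² - T) ≥ 0` for every `e`, where `f e = Re(eᴴ Q e) + 2 Re(eᴴ b) + c` is the
constraint function, `Q = S A S` and `b = S A h̃`. The theorem is therefore the lossless S-lemma for
a ball, proved through the optimality conditions of the trust-region problem.

Let `e₀` minimise `f` over the compact ball `‖e‖² ≤ T`. If `e₀` is interior, the gradient
`Q e₀ + b` vanishes, `Q ⪰ 0`, and `α = 0`. If `‖e₀‖² = T`, first-order conditions along inward
directions force `Q e₀ + b = -α e₀` with `α ≥ 0`. Then `g = f + α (‖·‖² - T)` is critical at `e₀`
and agrees with `f` on the sphere; every line through `e₀` transversal to the sphere meets it a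
second time, which gives `Q + α ⪰ 0` off a hyperplane and hence everywhere. In both cases
`g e = f e₀ + Re⟪e - e₀, (Q + α) (e - e₀)⟫ ≥ 0`.
-/

open Matrix BigOperators
open scoped ComplexOrder

noncomputable section

/-- The `(M+1) × (M+1)` Hermitian block matrix `[[A, b], [bᴴ, c]]`. -/
def blockMat {M : ℕ} (A : Matrix (Fin M) (Fin M) ℂ) (b : Fin M → ℂ) (c : ℝ) :
    Matrix (Fin M ⊕ Fin 1) (Fin M ⊕ Fin 1) ℂ :=
  Matrix.fromBlocks A (Matrix.of fun i (_ : Fin 1) => b i)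
    (Matrix.of fun (_ : Fin 1) j => star (b j)) (Matrix.of fun _ _ => (c : ℂ))

open Filter Topology RCLike
open scoped InnerProductSpace

theorem nonneg_of_eventually_nonneg_quadratic {a b c : ℝ}
    (h : ∀ᶠ t in 𝓝[>] (0 : ℝ), 0 ≤ a + b * t + c * t ^ 2) : 0 ≤ a :=
  ge_of_tendsto ((Continuous.tendsto' (by fun_prop) 0 a (by simp)).mono_left
    nhdsWithin_le_nhds) h

section InnerProductSpace

variable {𝕜 E : Type*} [RCLike 𝕜] [NormedAddCommGroup E] [InnerProductSpace 𝕜 E]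

def quadFun (Q : E →ₗ[𝕜] E) (b : E) (c : ℝ) (e : E) : ℝ :=
  re ⟪e, Q e⟫_𝕜 + 2 * re ⟪e, b⟫_𝕜 + c

variable {Q : E →ₗ[𝕜] E} {b : E} {c : ℝ}

theorem quadFun_add (hQ : Q.IsSymmetric) (e d : E) :
    quadFun Q b c (e + d) = quadFun Q b c e + 2 * re ⟪d, Q e + b⟫_𝕜 + re ⟪d, Q d⟫_𝕜 := by
  have hsymm : re ⟪e, Q d⟫_𝕜 = re ⟪d, Q e⟫_𝕜 := by
    rw [← hQ, ← inner_conj_symm, conj_re]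
  simp only [quadFun, map_add, inner_add_left, inner_add_right]
  linarith

theorem quadFun_add_smul (hQ : Q.IsSymmetric) (e d : E) (t : ℝ) :
    quadFun Q b c (e + (t : 𝕜) • d) =
      quadFun Q b c e + t * (2 * re ⟪d, Q e + b⟫_𝕜 + t * re ⟪d, Q d⟫_𝕜) := by
  simp only [quadFun_add hQ, map_smul, inner_smul_left, inner_smul_right, conj_ofReal,
    re_ofReal_mul]
  ring

theorem quadFun_add_smul_id (Q : E →ₗ[𝕜] E) (b : E) (c α T : ℝ) (e : E) :
    quadFun (Q + (α : 𝕜) • LinearMap.id) b (c - α * T) e =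
      quadFun Q b c e + α * (‖e‖ ^ 2 - T) := by
  simp only [quadFun, LinearMap.add_apply, LinearMap.smul_apply, LinearMap.id_apply,
    inner_add_right, inner_smul_right, map_add, re_ofReal_mul, inner_self_eq_norm_sq]
  ring

theorem re_inner_add_smul_id_apply (Q : E →ₗ[𝕜] E) (α : ℝ) (d : E) :
    re ⟪d, (Q + (α : 𝕜) • LinearMap.id : E →ₗ[𝕜] E) d⟫_𝕜 = re ⟪d, Q d⟫_𝕜 + α * ‖d‖ ^ 2 := by
  simp only [LinearMap.add_apply, LinearMap.smul_apply, LinearMap.id_apply, inner_add_right,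
    inner_smul_real_right, map_add, smul_re, inner_self_eq_norm_sq]

theorem LinearMap.IsSymmetric.add_smul_id (hQ : Q.IsSymmetric) (α : ℝ) :
    (Q + (α : 𝕜) • LinearMap.id).IsSymmetric :=
  hQ.add (LinearMap.IsSymmetric.id.smul (conj_ofReal α))

theorem norm_add_smul_sq (e d : E) (t : ℝ) :
    ‖e + (t : 𝕜) • d‖ ^ 2 = ‖e‖ ^ 2 + t * (2 * re ⟪d, e⟫_𝕜 + t * ‖d‖ ^ 2) := by
  rw [norm_add_sq (𝕜 := 𝕜), norm_smul, inner_smul_right, re_ofReal_mul, ← inner_conj_symm, conj_re,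
    norm_ofReal, mul_pow, sq_abs]
  ring

theorem re_inner_map_self_nonneg_of_forall_quadFun_nonneg (hQ : Q.IsSymmetric)
    (h : ∀ e, 0 ≤ quadFun Q b c e) (d : E) : 0 ≤ re ⟪d, Q d⟫_𝕜 := by
  refine nonneg_of_eventually_nonneg_quadratic (b := 2 * re ⟪d, b⟫_𝕜) (c := c) ?_
  filter_upwards [self_mem_nhdsWithin] with s (hs : 0 < s)
  have hscaled := h (0 + ((s⁻¹ : ℝ) : 𝕜) • d)
  rw [quadFun_add_smul hQ] at hscaled
  simp only [quadFun, map_zero, inner_zero_left, zero_add, mul_zero, add_zero] at hscaled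
  have hexp : re ⟪d, Q d⟫_𝕜 + 2 * re ⟪d, b⟫_𝕜 * s + c * s ^ 2 =
      s ^ 2 * (c + s⁻¹ * (2 * re ⟪d, b⟫_𝕜 + s⁻¹ * re ⟪d, Q d⟫_𝕜)) := by
    field_simp
    ring
  rw [hexp]
  exact mul_nonneg (sq_nonneg s) hscaled

theorem re_inner_nonneg_of_isMinOn (hQ : Q.IsSymmetric) {s : Set E} {e₀ d : E}
    (hmin : IsMinOn (quadFun Q b c) s e₀) (hd : ∀ᶠ t : ℝ in 𝓝[>] 0, e₀ + (t : 𝕜) • d ∈ s) :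
    0 ≤ re ⟪d, Q e₀ + b⟫_𝕜 := by
  suffices 0 ≤ 2 * re ⟪d, Q e₀ + b⟫_𝕜 by linarith
  refine nonneg_of_eventually_nonneg_quadratic (b := re ⟪d, Q d⟫_𝕜) (c := 0) ?_
  filter_upwards [hd, self_mem_nhdsWithin] with t hts (ht : 0 < t)
  have hle : quadFun Q b c e₀ ≤ quadFun Q b c (e₀ + (t : 𝕜) • d) := hmin hts
  rw [quadFun_add_smul hQ] at hle
  have := (mul_nonneg_iff_of_pos_left ht).mp (by linarith :
    0 ≤ t * (2 * re ⟪d, Q e₀ + b⟫_𝕜 + t * re ⟪d, Q d⟫_𝕜))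
  linarith

theorem re_inner_map_self_nonneg_of_le_quadFun (hQ : Q.IsSymmetric) {e₀ d : E}
    (hcrit : Q e₀ + b = 0) {t : ℝ} (ht : t ≠ 0)
    (hle : quadFun Q b c e₀ ≤ quadFun Q b c (e₀ + (t : 𝕜) • d)) : 0 ≤ re ⟪d, Q d⟫_𝕜 := by
  rw [quadFun_add_smul hQ, hcrit, inner_zero_right, map_zero] at hle
  exact (mul_nonneg_iff_of_pos_left (by positivity)).mp (by nlinarith : 0 ≤ t ^ 2 * re ⟪d, Q d⟫_𝕜)

theorem exists_nonneg_add_smul_eq_zero {v w : E} (hv : v ≠ 0)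
    (h : ∀ d, re ⟪d, v⟫_𝕜 < 0 → 0 ≤ re ⟪d, w⟫_𝕜) :
    ∃ α : ℝ, 0 ≤ α ∧ w + (α : 𝕜) • v = 0 := by
  have hv2 : 0 < ‖v‖ ^ 2 := by positivity
  set α := -re ⟪v, w⟫_𝕜 / ‖v‖ ^ 2 with hα_def
  have hα : 0 ≤ α := div_nonneg (by simpa using h (-v) (by simp [hv])) hv2.le
  set u := w + (α : 𝕜) • v
  have hvu : re ⟪u, v⟫_𝕜 = 0 := by
    simp only [u, inner_add_left, inner_smul_real_left, map_add, smul_re, inner_self_eq_norm_sq,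
      inner_re_symm w v, hα_def]
    field_simp
    ring
  have huw : re ⟪u, w⟫_𝕜 = ‖u‖ ^ 2 := by
    have hw : w = u - (α : 𝕜) • v := by simp [u]
    rw [hw, inner_sub_right, inner_smul_real_right, map_sub, smul_re, hvu,
      inner_self_eq_norm_sq]
    ring
  have hu : 0 ≤ -‖u‖ ^ 2 := by
    refine nonneg_of_eventually_nonneg_quadratic (b := α * ‖v‖ ^ 2) (c := 0) ?_
    filter_upwards [self_mem_nhdsWithin] with t (ht : 0 < t)
    have hdw := h (((-t : ℝ) : 𝕜) • v - u) (by
      simp only [inner_sub_left, inner_smul_real_left, map_sub, smul_re, inner_self_eq_norm_sq,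
        hvu]
      nlinarith)
    simp only [inner_sub_left, inner_smul_real_left, map_sub, smul_re, huw] at hdw
    have hαv : α * ‖v‖ ^ 2 = -re ⟪v, w⟫_𝕜 := by
      rw [hα_def]
      field_simp
    rw [hαv]
    linarith
  exact ⟨α, hα, norm_eq_zero.mp (by nlinarith [sq_nonneg ‖u‖] : ‖u‖ = 0)⟩

theorem kkt_of_isMinOn_of_norm_sq_lt (hQ : Q.IsSymmetric) {T : ℝ} {e₀ : E}
    (hmin : IsMinOn (quadFun Q b c) {e | ‖e‖ ^ 2 ≤ T} e₀) (he₀ : ‖e₀‖ ^ 2 < T) :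
    Q e₀ + b = 0 ∧ ∀ d, 0 ≤ re ⟪d, Q d⟫_𝕜 := by
  have hfeas (d : E) : ∀ᶠ t : ℝ in 𝓝[>] 0, e₀ + (t : 𝕜) • d ∈ {e | ‖e‖ ^ 2 ≤ T} := by
    have hlim : Tendsto (fun t : ℝ => ‖e₀ + (t : 𝕜) • d‖ ^ 2) (𝓝 0) (𝓝 (‖e₀‖ ^ 2)) :=
      Continuous.tendsto' (by fun_prop) 0 _ (by simp)
    exact ((hlim.eventually_lt_const he₀).mono fun t ht => ht.le).filter_mono nhdsWithin_le_nhds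
  have hcrit : Q e₀ + b = 0 := by
    have := re_inner_nonneg_of_isMinOn hQ hmin (hfeas (-(Q e₀ + b)))
    rw [inner_neg_left, map_neg, inner_self_eq_norm_sq, neg_nonneg] at this
    exact norm_eq_zero.mp (pow_eq_zero_iff two_ne_zero |>.mp (le_antisymm this (sq_nonneg _)))
  refine ⟨hcrit, fun d => ?_⟩
  obtain ⟨t, hts, ht⟩ := ((hfeas d).and self_mem_nhdsWithin).exists
  exact re_inner_map_self_nonneg_of_le_quadFun hQ hcrit (ne_of_gt ht) (hmin hts)

theorem exists_multiplier_of_isMinOn_of_norm_sq_eq (hQ : Q.IsSymmetric) {T : ℝ} (hT : 0 < T)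
    {e₀ : E} (hmin : IsMinOn (quadFun Q b c) {e | ‖e‖ ^ 2 ≤ T} e₀) (he₀ : ‖e₀‖ ^ 2 = T) :
    ∃ α : ℝ, 0 ≤ α ∧ Q e₀ + b + (α : 𝕜) • e₀ = 0 := by
  have he₀ne : e₀ ≠ 0 := by
    rintro rfl
    simp at he₀
    linarith
  refine exists_nonneg_add_smul_eq_zero he₀ne fun d hd => re_inner_nonneg_of_isMinOn hQ hmin ?_
  have hlim : Tendsto (fun t : ℝ => 2 * re ⟪d, e₀⟫_𝕜 + t * ‖d‖ ^ 2) (𝓝[>] 0)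
      (𝓝 (2 * re ⟪d, e₀⟫_𝕜)) :=
    (Continuous.tendsto' (by fun_prop) 0 _ (by simp)).mono_left nhdsWithin_le_nhds
  filter_upwards [hlim.eventually_lt_const (u := 0) (by linarith), self_mem_nhdsWithin]
    with t hneg (ht : 0 < t)
  show ‖_‖ ^ 2 ≤ T
  rw [norm_add_smul_sq, he₀]
  nlinarith

theorem re_inner_map_self_add_nonneg_of_isMinOn_of_norm_sq_eq [FiniteDimensional 𝕜 E]
    (hQ : Q.IsSymmetric) {T : ℝ} (hT : 0 < T) {e₀ : E}
    (hmin : IsMinOn (quadFun Q b c) {e | ‖e‖ ^ 2 ≤ T} e₀) (he₀ : ‖e₀‖ ^ 2 = T) {α : ℝ}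
    (hcrit : Q e₀ + b + (α : 𝕜) • e₀ = 0) (d : E) : 0 ≤ re ⟪d, Q d⟫_𝕜 + α * ‖d‖ ^ 2 := by
  rw [← re_inner_add_smul_id_apply]
  set Qα := Q + (α : 𝕜) • LinearMap.id
  have hcrit' : Qα e₀ + b = 0 := by
    rw [← hcrit]
    simp only [Qα, LinearMap.add_apply, LinearMap.smul_apply, LinearMap.id_apply]
    abel
  -- `e₀ + t • v` is the second point where the line through `e₀` meets the sphere.
  have hsphere (v : E) (hv : re ⟪v, e₀⟫_𝕜 ≠ 0) : 0 ≤ re ⟪v, Qα v⟫_𝕜 := by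
    have hv0 : ‖v‖ ≠ 0 := by
      rintro h0
      simp_all
    set t := -2 * re ⟪v, e₀⟫_𝕜 / ‖v‖ ^ 2
    have hnorm : ‖e₀ + (t : 𝕜) • v‖ ^ 2 = T := by
      rw [norm_add_smul_sq, he₀, show 2 * re ⟪v, e₀⟫_𝕜 + t * ‖v‖ ^ 2 = 0 by
        simp only [t]
        field_simp
        ring]
      ring
    refine re_inner_map_self_nonneg_of_le_quadFun (c := c - α * T) (t := t) (hQ.add_smul_id α)
      hcrit' (div_ne_zero (by simpa using hv) (by positivity)) ?_
    rw [quadFun_add_smul_id, quadFun_add_smul_id, he₀, hnorm, sub_self, mul_zero, add_zero,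
      add_zero]
    exact hmin hnorm.le
  by_cases hd : re ⟪d, e₀⟫_𝕜 = 0
  · have hcont : Continuous fun x => re ⟪x, Qα x⟫_𝕜 := by
      have := Qα.continuous_of_finiteDimensional
      fun_prop
    have hlim : Tendsto (fun ε : ℝ => d + (ε : 𝕜) • e₀) (𝓝[>] 0) (𝓝 d) :=
      (Continuous.tendsto' (by fun_prop) 0 d (by simp)).mono_left nhdsWithin_le_nhds
    refine ge_of_tendsto ((hcont.tendsto d).comp hlim) ?_
    filter_upwards [self_mem_nhdsWithin] with ε (hε : 0 < ε)
    apply hsphere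
    rw [inner_add_left, inner_smul_real_left, map_add, smul_re, hd, inner_self_eq_norm_sq, he₀]
    positivity
  · exact hsphere d hd

theorem exists_isMinOn_quadFun [FiniteDimensional 𝕜 E] (Q : E →ₗ[𝕜] E) (b : E) (c : ℝ) {T : ℝ}
    (hT : 0 ≤ T) : ∃ e₀ ∈ {e : E | ‖e‖ ^ 2 ≤ T}, IsMinOn (quadFun Q b c) {e | ‖e‖ ^ 2 ≤ T} e₀ := by
  have hK : IsCompact {e : E | ‖e‖ ^ 2 ≤ T} := by
    have := FiniteDimensional.proper_rclike 𝕜 E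
    convert isCompact_closedBall (0 : E) √T using 1
    ext e
    simp [Real.le_sqrt (norm_nonneg e) hT]
  have hcont : Continuous (quadFun Q b c) := by
    have := Q.continuous_of_finiteDimensional
    unfold quadFun
    fun_prop
  exact hK.exists_isMinOn ⟨0, by simpa using hT⟩ hcont.continuousOn

theorem forall_norm_sq_le_quadFun_nonneg_iff [FiniteDimensional 𝕜 E] (hQ : Q.IsSymmetric)
    {T : ℝ} (hT : 0 < T) :
    (∀ e, ‖e‖ ^ 2 ≤ T → 0 ≤ quadFun Q b c e) ↔
      ∃ α : ℝ, 0 ≤ α ∧ ∀ e, 0 ≤ quadFun (Q + (α : 𝕜) • LinearMap.id) b (c - α * T) e := by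
  constructor
  · intro h
    obtain ⟨e₀, he₀, hmin⟩ := exists_isMinOn_quadFun Q b c hT.le
    obtain ⟨α, hα, hslack, hcrit, hpsd⟩ : ∃ α : ℝ, 0 ≤ α ∧ α * (‖e₀‖ ^ 2 - T) = 0 ∧
        Q e₀ + b + (α : 𝕜) • e₀ = 0 ∧ ∀ d, 0 ≤ re ⟪d, Q d⟫_𝕜 + α * ‖d‖ ^ 2 := by
      rcases (show ‖e₀‖ ^ 2 ≤ T from he₀).lt_or_eq with hlt | heq
      · obtain ⟨hcrit, hpsd⟩ := kkt_of_isMinOn_of_norm_sq_lt hQ hmin hlt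
        exact ⟨0, le_rfl, zero_mul _, by simpa using hcrit, by simpa using hpsd⟩
      · obtain ⟨α, hα, hcrit⟩ := exists_multiplier_of_isMinOn_of_norm_sq_eq hQ hT hmin heq
        exact ⟨α, hα, by rw [heq, sub_self, mul_zero], hcrit,
          re_inner_map_self_add_nonneg_of_isMinOn_of_norm_sq_eq hQ hT hmin heq hcrit⟩
    refine ⟨α, hα, fun e => ?_⟩
    have hexp := quadFun_add (hQ.add_smul_id α) (b := b) (c := c - α * T) e₀ (e - e₀)
    have hcrit' : (Q + (α : 𝕜) • LinearMap.id : E →ₗ[𝕜] E) e₀ + b = 0 := by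
      rw [← hcrit, LinearMap.add_apply, LinearMap.smul_apply, LinearMap.id_apply, add_right_comm]
    rw [add_sub_cancel] at hexp
    rw [hexp, hcrit', inner_zero_right, map_zero, mul_zero, add_zero, quadFun_add_smul_id, hslack,
      add_zero, re_inner_add_smul_id_apply]
    exact add_nonneg (h e₀ he₀) (hpsd _)
  · rintro ⟨α, hα, h⟩ e he
    have := h e
    rw [quadFun_add_smul_id] at this
    nlinarith

end InnerProductSpace

section Matrix

variable {𝕜 n : Type*} [RCLike 𝕜] [Fintype n]

theorem Matrix.IsHermitian.star_dotProduct_mulVec_self_nonneg_iff {K : Matrix n n 𝕜}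
    (hK : K.IsHermitian) (x : n → 𝕜) : 0 ≤ star x ⬝ᵥ K *ᵥ x ↔ 0 ≤ re (star x ⬝ᵥ K *ᵥ x) := by
  rw [RCLike.nonneg_iff, hK.im_star_dotProduct_mulVec_self x]
  exact and_iff_left rfl

theorem Matrix.star_smul_dotProduct_mulVec_smul (K : Matrix n n 𝕜) (a : 𝕜) (x : n → 𝕜) :
    star (a • x) ⬝ᵥ K *ᵥ (a • x) = star a * a * (star x ⬝ᵥ K *ᵥ x) := by
  rw [star_smul, smul_dotProduct, mulVec_smul, dotProduct_smul, smul_eq_mul, smul_eq_mul]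
  ring

variable [DecidableEq n]

theorem Matrix.inner_toLp_toEuclideanLin_toLp (K : Matrix n n 𝕜) (x y : n → 𝕜) :
    ⟪WithLp.toLp 2 x, K.toEuclideanLin (WithLp.toLp 2 y)⟫_𝕜 = star x ⬝ᵥ K *ᵥ y := by
  rw [toLpLin_toLp, EuclideanSpace.inner_toLp_toLp, dotProduct_comm]
  rfl

theorem quadFun_toEuclideanLin (K : Matrix n n 𝕜) (b x : n → 𝕜) (c : ℝ) :
    quadFun K.toEuclideanLin (WithLp.toLp 2 b) c (WithLp.toLp 2 x) =
      re (star x ⬝ᵥ K *ᵥ x) + 2 * re (star x ⬝ᵥ b) + c := by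
  rw [quadFun, Matrix.inner_toLp_toEuclideanLin_toLp, EuclideanSpace.inner_toLp_toLp,
    dotProduct_comm b]

end Matrix

section BlockMat

variable {M : ℕ} {K : Matrix (Fin M) (Fin M) ℂ}

theorem isHermitian_blockMat (hK : K.IsHermitian) (b : Fin M → ℂ) (c : ℝ) :
    (blockMat K b c).IsHermitian :=
  IsHermitian.fromBlocks hK (by ext; simp) (by ext; simp)

theorem re_star_dotProduct_blockMat_mulVec (K : Matrix (Fin M) (Fin M) ℂ) (b x : Fin M → ℂ)
    (c : ℝ) (τ : ℂ) :
    (star (Sum.elim x fun _ => τ) ⬝ᵥ blockMat K b c *ᵥ Sum.elim x fun _ => τ).re =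
      (star x ⬝ᵥ K *ᵥ x).re + 2 * (τ * (star x ⬝ᵥ b)).re + c * ‖τ‖ ^ 2 := by
  have hform : star (Sum.elim x fun _ => τ) ⬝ᵥ blockMat K b c *ᵥ Sum.elim x (fun _ => τ) =
      star x ⬝ᵥ K *ᵥ x + τ * (star x ⬝ᵥ b) + star τ * (star b ⬝ᵥ x) + c * (star τ * τ) := by
    rw [blockMat, fromBlocks_mulVec, dotProduct_block]
    simp only [Function.comp_def, Sum.elim_inl, Sum.elim_inr, Pi.star_apply]
    simp only [dotProduct, star_def, Pi.add_apply, mulVec, Finset.univ_unique,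
      Fin.default_eq_zero, of_apply, Finset.sum_const, Finset.card_singleton, one_smul, mul_add,
      Finset.mul_sum, Finset.sum_add_distrib, smul_add, Pi.star_apply]
    simp only [mul_comm, mul_left_comm, mul_assoc, add_assoc]
  rw [hform, star_dotProduct b x, ← star_mul', add_assoc _ (τ * _), Complex.star_def,
    Complex.add_conj, Complex.conj_mul']
  simp [← Complex.ofReal_pow]

theorem posSemidef_blockMat_iff (hK : K.IsHermitian) (b : Fin M → ℂ) (c : ℝ) :
    (blockMat K b c).PosSemidef ↔
      ∀ e : EuclideanSpace ℂ (Fin M), 0 ≤ quadFun K.toEuclideanLin (WithLp.toLp 2 b) c e := by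
  have hform (x : Fin M → ℂ) : quadFun K.toEuclideanLin (WithLp.toLp 2 b) c (WithLp.toLp 2 x) =
      (star (Sum.elim x fun _ => 1) ⬝ᵥ blockMat K b c *ᵥ Sum.elim x fun _ => 1).re := by
    rw [quadFun_toEuclideanLin, re_star_dotProduct_blockMat_mulVec]
    simp
  have hB := isHermitian_blockMat hK b c
  rw [(WithLp.toLp_surjective 2).forall]
  constructor
  · intro h x
    rw [hform]
    exact (Complex.nonneg_iff.mp (h.dotProduct_mulVec_nonneg _)).1
  · intro h
    refine .of_dotProduct_mulVec_nonneg hB fun z => ?_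
    obtain ⟨x, τ, rfl⟩ : ∃ x τ, z = Sum.elim x fun _ => τ :=
      ⟨z ∘ Sum.inl, z (Sum.inr 0), by ext (i | i) <;> simp [Fin.fin_one_eq_zero]⟩
    rw [hB.star_dotProduct_mulVec_self_nonneg_iff, RCLike.re_to_complex]
    rcases eq_or_ne τ 0 with rfl | hτ
    · have := re_inner_map_self_nonneg_of_forall_quadFun_nonneg
        (isSymmetric_toEuclideanLin_iff.mpr hK) (((WithLp.toLp_surjective 2).forall).mpr h)
        (WithLp.toLp 2 x)
      rw [Matrix.inner_toLp_toEuclideanLin_toLp] at this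
      simpa [re_star_dotProduct_blockMat_mulVec] using this
    · have hz : (Sum.elim x fun _ => τ : Fin M ⊕ Fin 1 → ℂ) =
          τ • Sum.elim (τ⁻¹ • x) fun _ => 1 := by
        ext (i | i) <;> simp [hτ]
      rw [hz, star_smul_dotProduct_mulVec_smul, Complex.star_def, Complex.conj_mul',
        ← Complex.ofReal_pow, Complex.re_ofReal_mul, ← hform]
      exact mul_nonneg (sq_nonneg _) (h _)

end BlockMat

theorem sphere_constraint_iff_lmi_general (M : ℕ)
    (A S : Matrix (Fin M) (Fin M) ℂ) (hA : A.IsHermitian) (hS : S.IsHermitian)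
    (ht : Fin M → ℂ) (σsq : ℝ) (T : ℝ) (hT : 0 < T) :
    (∀ e : Fin M → ℂ, (∑ i, ‖e i‖ ^ 2) ≤ T →
      0 ≤ (star e ⬝ᵥ (S * A * S).mulVec e).re +
          2 * (star e ⬝ᵥ (S * A).mulVec ht).re +
          (star ht ⬝ᵥ A.mulVec ht).re - σsq) ↔
    (∃ α : ℝ, 0 ≤ α ∧
      (blockMat (S * A * S + (α : ℂ) • (1 : Matrix (Fin M) (Fin M) ℂ))
        ((S * A).mulVec ht)
        ((star ht ⬝ᵥ A.mulVec ht).re - σsq - α * T)).PosSemidef) := by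
  have hK : (S * A * S).IsHermitian := by
    simpa [hS.eq] using isHermitian_mul_mul_conjTranspose S hA
  have hQ := isSymmetric_toEuclideanLin_iff.mpr hK
  have hKα (α : ℝ) : toEuclideanLin (S * A * S + (α : ℂ) • 1) =
      toEuclideanLin (S * A * S) + (α : ℂ) • LinearMap.id := by
    rw [map_add, map_smul, toLpLin_one]
  calc _ ↔ ∀ e : EuclideanSpace ℂ (Fin M), ‖e‖ ^ 2 ≤ T →
        0 ≤ quadFun (S * A * S).toEuclideanLin (WithLp.toLp 2 ((S * A) *ᵥ ht))
          ((star ht ⬝ᵥ A *ᵥ ht).re - σsq) e := by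
        simp only [(WithLp.toLp_surjective 2).forall, EuclideanSpace.norm_sq_eq,
          quadFun_toEuclideanLin, RCLike.re_to_complex, add_sub_assoc]
    _ ↔ _ := forall_norm_sq_le_quadFun_nonneg_iff hQ hT
    _ ↔ _ := by
      refine exists_congr fun α => and_congr_right fun _ => ?_
      rw [posSemidef_blockMat_iff (isSymmetric_toEuclideanLin_iff.mp (hKα α ▸ hQ.add_smul_id α)),
        hKα]
      -- the two sides differ only in `RCLike.ofReal` versus `Complex.ofReal`
      rfl

/-- S-procedure transformation of the sphere-bounded robust SINR constraint into a
linear matrix inequality (first LMI of problem (13) of the paper). -/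
theorem sphere_constraint_iff_lmi (M : ℕ) (hM : 1 ≤ M)
    (A S : Matrix (Fin M) (Fin M) ℂ) (hA : A.IsHermitian) (hS : S.IsHermitian)
    (ht : Fin M → ℂ) (σsq : ℝ) (T : ℝ) (hT : 0 < T) :
    (∀ e : Fin M → ℂ, (∑ i, ‖e i‖ ^ 2) ≤ T →
      0 ≤ (star e ⬝ᵥ (S * A * S).mulVec e).re +
          2 * (star e ⬝ᵥ (S * A).mulVec ht).re +
          (star ht ⬝ᵥ A.mulVec ht).re - σsq) ↔
    (∃ α : ℝ, 0 ≤ α ∧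
      (blockMat (S * A * S + (α : ℂ) • (1 : Matrix (Fin M) (Fin M) ℂ))
        ((S * A).mulVec ht)
        ((star ht ⬝ᵥ A.mulVec ht).re - σsq - α * T)).PosSemidef) :=
  sphere_constraint_iff_lmi_general M A S hA hS ht σsq T hT
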